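/- In the same setting: ‖ỹ − ŷ‖² ≤ α_max μ τ (−h(ỹ)), where ŷ is the exact minimizer of the strongly convex model h and ỹ is a τ-approximation satisfying h(ỹ) ≤ (2/(2+τ)) h(ŷ). -/

import Mathlib

/-!
The model `h` is the sum of an affine function, the convex function `φ` and the quadratic
`(1/(2α)) ‖y - x‖_D²`, so along every segment it lies below its chord by
`t (1 - t) (1/(2α)) ‖b - a‖_D²`. At the minimiser `ŷ` this gives the quadratic growth
`(1/(2α)) ‖ỹ - ŷ‖_D² ≤ h(ỹ) - h(ŷ)`. The approximation condition bounds `h(ỹ) - h(ŷ)` by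
`(τ/2) (-h(ỹ))`, and `‖·‖² ≤ μ ‖·‖_D²` converts the `D`-norm into the Euclidean one.
-/

open Matrix Set Filter Topology

noncomputable def mulVecE {n : ℕ} (D : Matrix (Fin n) (Fin n) ℝ)
    (v : EuclideanSpace ℝ (Fin n)) : EuclideanSpace ℝ (Fin n) :=
  (WithLp.equiv 2 (Fin n → ℝ)).symm (D *ᵥ fun i => v i)

/-- The quadratic form `⟨v, D v⟩` (i.e. `‖v‖_D²`). -/
noncomputable def quadE {n : ℕ} (D : Matrix (Fin n) (Fin n) ℝ)
    (v : EuclideanSpace ℝ (Fin n)) : ℝ :=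
  (fun i => v i) ⬝ᵥ (D *ᵥ fun i => v i)

theorem IsMinOn.le_sub_of_le_chord_sub {E : Type*} [AddCommGroup E] [Module ℝ E]
    {g Q : E → ℝ} {a b : E} (hmin : IsMinOn g univ a)
    (hchord : ∀ t ∈ Ioo (0 : ℝ) 1,
      g ((1 - t) • a + t • b) ≤ (1 - t) * g a + t * g b - t * (1 - t) * Q (b - a)) :
    Q (b - a) ≤ g b - g a := by
  have hlim : Tendsto (fun t : ℝ => (1 - t) * Q (b - a)) (𝓝[>] 0) (𝓝 (Q (b - a))) := by
    have : Continuous fun t : ℝ => (1 - t) * Q (b - a) := by fun_prop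
    simpa using (this.continuousWithinAt (s := Ioi 0) (x := 0)).tendsto
  refine le_of_tendsto hlim ?_
  filter_upwards [Ioo_mem_nhdsGT (zero_lt_one' ℝ)] with t ht
  have hmin_t := isMinOn_iff.mp hmin ((1 - t) • a + t • b) (mem_univ _)
  have : t * ((1 - t) * Q (b - a)) ≤ t * (g b - g a) := by
    linarith [hchord t ht]
  exact le_of_mul_le_mul_left this ht.1

theorem quadE_add_sub_chord {n : ℕ} (D : Matrix (Fin n) (Fin n) ℝ)
    (a b : EuclideanSpace ℝ (Fin n)) (t : ℝ) :
    quadE D ((1 - t) • a + t • b)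
      = (1 - t) * quadE D a + t * quadE D b - t * (1 - t) * quadE D (b - a) := by
  have hab : (fun i => ((1 - t) • a + t • b) i) = (1 - t) • (fun i => a i) + t • fun i => b i := rfl
  have hba : (fun i => (b - a) i) = (fun i => b i) - fun i => a i := rfl
  simp only [quadE, hab, hba, mulVec_add, mulVec_sub, mulVec_smul, dotProduct_add, add_dotProduct,
    dotProduct_sub, sub_dotProduct, dotProduct_smul, smul_dotProduct, smul_eq_mul]
  ring

theorem sq_norm_le_mul_quadE {n : ℕ} {D : Matrix (Fin n) (Fin n) ℝ} {μ : ℝ} (hμ : 0 < μ)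
    (hlow : ∀ v : Fin n → ℝ, (1/μ) * (v ⬝ᵥ v) ≤ v ⬝ᵥ (D *ᵥ v))
    (v : EuclideanSpace ℝ (Fin n)) :
    ‖v‖ ^ 2 ≤ μ * quadE D v := by
  have hnorm : ‖v‖ ^ 2 = (fun i => v i) ⬝ᵥ fun i => v i := by
    rw [EuclideanSpace.real_norm_sq_eq]
    simp [dotProduct, sq]
  rw [hnorm, quadE, ← inv_mul_le_iff₀ hμ, ← one_div]
  exact hlow _

noncomputable def proxModel {n : ℕ} (g : EuclideanSpace ℝ (Fin n)) (c : ℝ)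
    (D : Matrix (Fin n) (Fin n) ℝ) (φ : EuclideanSpace ℝ (Fin n) → ℝ)
    (x y : EuclideanSpace ℝ (Fin n)) : ℝ :=
  inner ℝ g (y - x) + c * quadE D (y - x) + φ y - φ x

section proxModel

variable {n : ℕ} (g : EuclideanSpace ℝ (Fin n)) (c : ℝ) (D : Matrix (Fin n) (Fin n) ℝ)
  {φ : EuclideanSpace ℝ (Fin n) → ℝ} (x : EuclideanSpace ℝ (Fin n))

theorem proxModel_self : proxModel g c D φ x x = 0 := by
  simp [proxModel, quadE]

theorem proxModel_le_chord_sub (hφ : ConvexOn ℝ univ φ) (a b : EuclideanSpace ℝ (Fin n))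
    {t : ℝ} (ht : t ∈ Icc (0 : ℝ) 1) :
    proxModel g c D φ x ((1 - t) • a + t • b)
      ≤ (1 - t) * proxModel g c D φ x a + t * proxModel g c D φ x b
        - t * (1 - t) * (c * quadE D (b - a)) := by
  have hshift : (1 - t) • a + t • b - x = (1 - t) • (a - x) + t • (b - x) := by module
  have hφab : φ ((1 - t) • a + t • b) ≤ (1 - t) * φ a + t * φ b :=
    hφ.2 (mem_univ a) (mem_univ b) (by linarith [ht.2]) ht.1 (by ring)
  have hba : b - x - (a - x) = b - a := by abel
  simp only [proxModel, hshift, inner_add_right, real_inner_smul_right, quadE_add_sub_chord, hba]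
  linear_combination hφab

end proxModel

theorem stmt7_general {n : ℕ} (f : EuclideanSpace ℝ (Fin n) → ℝ)
    (φ : EuclideanSpace ℝ (Fin n) → ℝ) (hconv : ConvexOn ℝ Set.univ φ)
    (α αmax β τ μ : ℝ) (hα : 0 < α) (hαmax : α ≤ αmax) (hτ : 0 ≤ τ) (hμ : 0 < μ)
    (D : Matrix (Fin n) (Fin n) ℝ)
    (hlow : ∀ v : Fin n → ℝ, (1/μ) * (v ⬝ᵥ v) ≤ v ⬝ᵥ (D *ᵥ v))
    (x w : EuclideanSpace ℝ (Fin n))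
    (h : EuclideanSpace ℝ (Fin n) → ℝ)
    (hh : h = fun y => (inner ℝ (gradient f x - (β/α) • mulVecE D (x - w)) (y - x) : ℝ)
      + (1/(2*α)) * quadE D (y - x) + φ y - φ x)
    (yhat ytil : EuclideanSpace ℝ (Fin n)) (hmin : IsMinOn h Set.univ yhat)
    (happrox : h ytil ≤ (2/(2+τ)) * h yhat) :
    ‖ytil - yhat‖^2 ≤ αmax * μ * τ * (-h ytil) := by
  have hmodel : h = proxModel (gradient f x - (β/α) • mulVecE D (x - w)) (1 / (2 * α)) D φ x := hh
  have hgrowth : 1 / (2 * α) * quadE D (ytil - yhat) ≤ h ytil - h yhat :=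
    hmin.le_sub_of_le_chord_sub (Q := fun v => 1 / (2 * α) * quadE D v) fun t ht => hmodel ▸
      proxModel_le_chord_sub _ _ _ _ hconv _ _ (Ioo_subset_Icc_self ht)
  have hyhat : h yhat ≤ 0 :=
    (isMinOn_iff.mp hmin x (mem_univ x)).trans_eq (hmodel ▸ proxModel_self ..)
  have hgap : h ytil - h yhat ≤ τ / 2 * -h ytil := by
    rw [div_mul_eq_mul_div, le_div_iff₀ (by linarith)] at happrox
    linarith
  have hytil : 0 ≤ -h ytil := by
    have : 2 / (2 + τ) * h yhat ≤ 0 := mul_nonpos_of_nonneg_of_nonpos (by positivity) hyhat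
    linarith
  calc ‖ytil - yhat‖ ^ 2 ≤ μ * quadE D (ytil - yhat) := sq_norm_le_mul_quadE hμ hlow _
    _ ≤ μ * (2 * α * (h ytil - h yhat)) := by
      rw [one_div, inv_mul_le_iff₀ (by positivity)] at hgrowth
      gcongr
    _ ≤ μ * (2 * α * (τ / 2 * -h ytil)) := by gcongr
    _ ≤ αmax * μ * τ * -h ytil := by
      have := mul_le_mul_of_nonneg_right hαmax (by positivity : 0 ≤ μ * τ * -h ytil)
      linarith

theorem stmt7 {n : ℕ} (f : EuclideanSpace ℝ (Fin n) → ℝ) (hf : ContDiff ℝ 1 f)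
    (φ : EuclideanSpace ℝ (Fin n) → ℝ) (hconv : ConvexOn ℝ Set.univ φ)
    (hlsc : LowerSemicontinuous φ)
    (α αmax β τ μ : ℝ) (hα : 0 < α) (hαmax : α ≤ αmax) (hβ : 0 < β) (hτ : 0 ≤ τ) (hμ : 0 < μ)
    (D : Matrix (Fin n) (Fin n) ℝ) (hsym : D.IsSymm) (hpd : D.PosDef)
    (hlow : ∀ v : Fin n → ℝ, (1/μ) * (v ⬝ᵥ v) ≤ v ⬝ᵥ (D *ᵥ v))
    (hup : ∀ v : Fin n → ℝ, v ⬝ᵥ (D *ᵥ v) ≤ μ * (v ⬝ᵥ v))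
    (x w : EuclideanSpace ℝ (Fin n))
    (h : EuclideanSpace ℝ (Fin n) → ℝ)
    (hh : h = fun y => (inner ℝ (gradient f x - (β/α) • mulVecE D (x - w)) (y - x) : ℝ)
      + (1/(2*α)) * quadE D (y - x) + φ y - φ x)
    (yhat ytil : EuclideanSpace ℝ (Fin n)) (hmin : IsMinOn h Set.univ yhat)
    (happrox : h ytil ≤ (2/(2+τ)) * h yhat) :
    ‖ytil - yhat‖^2 ≤ αmax * μ * τ * (-h ytil) :=
  stmt7_general f φ hconv α αmax β τ μ hα hαmax hτ hμ D hlow x w h hh yhat ytil hmin happrox
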